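/- Let β ∈ (1,2], α > 0, a < b. Then: (i) for every integer M ≥ 2 with h = (b−a)/M, the (M−1)×(M−1) real matrix B with entries B_{j,l} = α δ_{j,l} + cos(βπ/2) h^{−β} w̃_{j−l}^{(β)} for 1 ≤ j,l ≤ M−1 is invertible, so the FCD scheme is uniquely solvable; and (ii) there exists a constant C > 0 depending only on a, b and β (independent of h and α) such that every solution (u_j) of the FCD scheme α u_j + cos(βπ/2) Δ_x^β u_j = f_j (1 ≤ j ≤ M−1), u_0 = u_M = 0, satisfies max_{0≤j≤M} |u_j| ≤ C max_{1≤j≤M−1} |f_j|. -/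

import Mathlib

/-- The fractional centered difference weights `w̃_k^{(β)}`; note that `Real.Gamma`
vanishes at nonpositive integers and division by zero is zero, so `1/Γ(m)` is
interpreted as `0` there. -/
noncomputable def fcd (β : ℝ) (k : ℤ) : ℝ :=
  -((-1 : ℝ) ^ k * Real.Gamma (β + 1) /
    (Real.Gamma (β / 2 - k + 1) * Real.Gamma (β / 2 + k + 1)))

open Real Finset

/-- negated weights -/
noncomputable def gw (β : ℝ) (k : ℤ) : ℝ :=
  (-1 : ℝ) ^ k * Real.Gamma (β + 1) /
    (Real.Gamma (β / 2 - k + 1) * Real.Gamma (β / 2 + k + 1))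

lemma fcd_eq (β : ℝ) (k : ℤ) : fcd β k = -gw β k := rfl

lemma gw_neg (β : ℝ) (k : ℤ) : gw β (-k) = gw β k := by
  unfold gw
  have h1 : ((-1 : ℝ) ^ (-k)) = (-1 : ℝ) ^ k := by
    rw [zpow_neg]
    rcases Int.even_or_odd k with h | h
    · rw [h.neg_one_zpow]; norm_num
    · rw [Odd.neg_one_zpow h]; norm_num
  rw [h1]
  push_cast
  ring_nf

lemma gw_zero_pos (β : ℝ) (hβ : 0 < β) : 0 < gw β 0 := by
  unfold gw
  simp only [zpow_zero, one_mul, Int.cast_zero, sub_zero, add_zero]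
  have h1 : 0 < Real.Gamma (β + 1) := Real.Gamma_pos_of_pos (by linarith)
  have h2 : 0 < Real.Gamma (β / 2 + 1) := Real.Gamma_pos_of_pos (by linarith)
  positivity

lemma gw_one (β : ℝ) : gw β 1 = -(Real.Gamma (β + 1) / (Real.Gamma (β / 2) * Real.Gamma (β / 2 + 2))) := by
  unfold gw
  norm_num
  ring_nf

lemma gw_recurrence (β : ℝ) (hβ : 1 < β) (hβ2 : β ≤ 2) (n : ℕ) :
    ((n : ℝ) + 1 + β / 2) * gw β ((n : ℤ) + 1) = ((n : ℝ) - β / 2) * gw β n := by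
  set s := β / 2 with hs
  have hs1 : 1 / 2 < s := by rw [hs]; linarith
  have hs2 : s ≤ 1 := by rw [hs]; linarith
  have hpos : (0:ℝ) < s + n + 1 := by positivity
  have hG2 : Real.Gamma (s + (n:ℝ) + 2) = (s + n + 1) * Real.Gamma (s + n + 1) := by
    have := Real.Gamma_add_one (s := s + n + 1) (by positivity)
    rw [show s + (n:ℝ) + 2 = s + n + 1 + 1 by ring, this]
  have hGpos : 0 < Real.Gamma (s + (n:ℝ) + 1) := Real.Gamma_pos_of_pos (by positivity)
  by_cases h1 : Real.Gamma (s - n + 1) = 0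
  · -- then Gamma (s - n) = 0 too
    have hsn : s - (n:ℝ) ≠ 0 := by
      intro h
      rw [show s - (n:ℝ) + 1 = 0 + 1 by rw [h]] at h1
      norm_num [Real.Gamma_one] at h1
    have h0 : Real.Gamma (s - n) = 0 := by
      have := Real.Gamma_add_one hsn
      rw [this] at h1
      rcases mul_eq_zero.mp h1 with h | h
      · exact absurd h hsn
      · exact h
    unfold gw
    push_cast
    rw [show s - ((n:ℝ) + 1) + 1 = s - n by ring, h0]
    rw [show s - (n:ℝ) + 1 = (s - n) + 1 by ring, Real.Gamma_add_one hsn, h0]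
    simp
  · by_cases h2 : s - (n:ℝ) = 0
    · -- RHS coefficient n - s = 0; LHS gw (n+1) = 0 since Gamma (s - n) = Gamma 0 = 0
      have hL : Real.Gamma (s - ((n:ℝ) + 1) + 1) = 0 := by
        rw [show s - ((n:ℝ) + 1) + 1 = s - n by ring, h2, Real.Gamma_zero]
      unfold gw
      push_cast
      rw [hL]
      rw [show (n:ℝ) - s = -(s - n) by ring, h2]
      simp
    · -- generic case
      have hGs : Real.Gamma (s - (n:ℝ) + 1) = (s - n) * Real.Gamma (s - n) := by
        have := Real.Gamma_add_one h2
        rw [this]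
      have h3 : Real.Gamma (s - (n:ℝ)) ≠ 0 := by
        intro h
        rw [hGs, h, mul_zero] at h1
        exact h1 rfl
      unfold gw
      push_cast
      rw [show s - ((n:ℝ) + 1) + 1 = s - n by ring, hGs,
        show s + ((n:ℝ) + 1) + 1 = s + n + 2 by ring, hG2,
        show s + (n:ℝ) + 1 = s + n + 1 by ring]
      rw [zpow_add_one₀ (by norm_num : (-1:ℝ) ≠ 0)]
      field_simp
      ring




lemma gw_one_nonpos (β : ℝ) (hβ : 1 < β) (hβ2 : β ≤ 2) : gw β 1 ≤ 0 := by
  unfold gw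
  push_cast
  have h1 : 0 < Real.Gamma (β + 1) := Real.Gamma_pos_of_pos (by linarith)
  have h2 : 0 < Real.Gamma (β / 2 - 1 + 1) := by
    rw [show β / 2 - 1 + 1 = β/2 by ring]
    exact Real.Gamma_pos_of_pos (by linarith)
  have h3 : 0 < Real.Gamma (β / 2 + 1 + 1) := Real.Gamma_pos_of_pos (by linarith)
  have : ((-1 : ℝ) ^ (1:ℤ)) = -1 := by norm_num
  rw [this]
  apply div_nonpos_of_nonpos_of_nonneg
  · nlinarith
  · positivity

lemma gw_nat_nonpos (β : ℝ) (hβ : 1 < β) (hβ2 : β ≤ 2) (n : ℕ) (hn : 1 ≤ n) :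
    gw β n ≤ 0 := by
  induction n with
  | zero => omega
  | succ m ih =>
    rcases Nat.lt_or_ge 1 (m+1) with h | h
    · have hm : 1 ≤ m := by omega
      have hrec := gw_recurrence β hβ hβ2 m
      have hpos : (0:ℝ) < (m:ℝ) + 1 + β / 2 := by positivity
      have hg : gw β ((m:ℤ)+1) = ((m:ℝ) - β/2) * gw β m / ((m:ℝ) + 1 + β / 2) := by
        field_simp
        linarith [hrec]
      have hcoef : (0:ℝ) ≤ (m:ℝ) - β/2 := by
        have : (1:ℝ) ≤ (m:ℝ) := by exact_mod_cast hm
        linarith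
      have := ih hm
      rw [show ((m+1 : ℕ) : ℤ) = (m:ℤ)+1 by push_cast; ring, hg]
      apply div_nonpos_of_nonpos_of_nonneg _ (le_of_lt hpos)
      exact mul_nonpos_of_nonneg_of_nonpos hcoef this
    · have : m = 0 := by omega
      subst this
      exact gw_one_nonpos β hβ hβ2




lemma Icc_insert_bot (a b : ℤ) (h : a ≤ b) :
    Finset.Icc a b = insert a (Finset.Icc (a+1) b) := by
  ext k; simp only [Finset.mem_Icc, Finset.mem_insert]; omega

lemma Icc_insert_top (a b : ℤ) (h : a ≤ b) :
    Finset.Icc a b = insert b (Finset.Icc a (b-1)) := by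
  ext k; simp only [Finset.mem_Icc, Finset.mem_insert]; omega

/-- partial sum of gw from 0 to N -/
noncomputable def Pz (β : ℝ) (N : ℕ) : ℝ := ∑ k ∈ Finset.Icc (0:ℤ) (N:ℤ), gw β k

lemma Pz_zero (β : ℝ) : Pz β 0 = gw β 0 := by
  unfold Pz; norm_num

lemma Pz_succ (β : ℝ) (N : ℕ) : Pz β (N+1) = Pz β N + gw β ((N:ℤ)+1) := by
  unfold Pz
  rw [show ((N+1:ℕ):ℤ) = (N:ℤ)+1 by push_cast; ring]
  rw [Icc_insert_top 0 ((N:ℤ)+1) (by positivity)]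
  rw [Finset.sum_insert (by simp)]
  ring_nf

/-- closed form: 2s P_N = s g_0 + (s - N) g_N with s = β/2 -/
lemma Pz_closed (β : ℝ) (hβ : 1 < β) (hβ2 : β ≤ 2) (N : ℕ) :
    2 * (β/2) * Pz β N = (β/2) * gw β 0 + ((β/2) - N) * gw β N := by
  induction N with
  | zero => rw [Pz_zero]; push_cast; ring
  | succ m ih =>
    rw [Pz_succ]
    have hrec := gw_recurrence β hβ hβ2 m
    push_cast
    nlinarith [ih, hrec]

/-- the two-sided sum -/
lemma sum_Icc_gw (β : ℝ) (m j : ℕ) :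
    ∑ k ∈ Finset.Icc (-(m:ℤ)) (j:ℤ), gw β k = Pz β j + Pz β m - gw β 0 := by
  induction m with
  | zero => rw [Pz_zero]; unfold Pz; norm_num
  | succ n ih =>
    rw [show (-((n+1:ℕ):ℤ)) = (-(n:ℤ)) - 1 by push_cast; ring]
    rw [Icc_insert_bot (-(n:ℤ) - 1) (j:ℤ) (by omega)]
    rw [Finset.sum_insert (by simp only [Finset.mem_Icc]; omega)]
    rw [show (-(n:ℤ) - 1 + 1) = -(n:ℤ) by ring, ih]
    rw [show (-(n:ℤ) - 1) = -((n:ℤ)+1) by ring, gw_neg]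
    rw [Pz_succ]
    ring




noncomputable def cβ (β : ℝ) : ℝ := Real.Gamma (β+1) / (Real.Gamma (β/2) * Real.Gamma (1 - β/2))
noncomputable def γβ (β : ℝ) : ℝ := (1 - β/2) * cβ β * (3:ℝ) ^ (-(1+β)) / β

lemma gw_closed (β : ℝ) (hβ : 1 < β) (hβ2 : β < 2) (n : ℕ) (hn : 1 ≤ n) :
    gw β n = -(cβ β) *
      (Real.Gamma ((n:ℝ) - β/2) / Real.Gamma ((n:ℝ) + 1 + β/2)) := by
  unfold cβ
  have hs1 : 1/2 < β/2 := by linarith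
  have hs2 : β/2 < 1 := by linarith
  induction n with
  | zero => omega
  | succ m ih =>
    rcases Nat.eq_zero_or_pos m with h | hm
    · subst h
      unfold gw
      push_cast
      rw [show β/2 - 1 + 1 = β/2 by ring]
      have h2s : Real.Gamma ((1:ℝ) + 1 + β/2) = (1+β/2) * (β/2) * Real.Gamma (β/2) := by
        rw [show (1:ℝ) + 1 + β/2 = (β/2+1) + 1 by ring, Real.Gamma_add_one (by positivity),
          Real.Gamma_add_one (by positivity)]
        ring
      have h2s' : Real.Gamma (β/2 + 1 + 1) = (1+β/2) * (β/2) * Real.Gamma (β/2) := by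
        rw [show β/2 + 1 + 1 = (β/2+1) + 1 by ring, Real.Gamma_add_one (by positivity),
          Real.Gamma_add_one (by positivity)]
        ring
      rw [h2s, h2s']
      have hΓs : Real.Gamma (β/2) ≠ 0 := ne_of_gt (Real.Gamma_pos_of_pos (by linarith))
      have hΓ1s : Real.Gamma (1-β/2) ≠ 0 := ne_of_gt (Real.Gamma_pos_of_pos (by linarith))
      have he : ((-1:ℝ)^(1:ℤ)) = -1 := by norm_num
      have hd1 : Real.Gamma (β/2) * ((1+β/2) * (β/2) * Real.Gamma (β/2)) ≠ 0 := by
        have := Real.Gamma_pos_of_pos (show (0:ℝ) < β/2 by linarith)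
        positivity
      have hd2 : Real.Gamma (β/2) * Real.Gamma (1-β/2) * ((1+β/2) * (β/2) * Real.Gamma (β/2)) ≠ 0 := by
        have := Real.Gamma_pos_of_pos (show (0:ℝ) < β/2 by linarith)
        have := Real.Gamma_pos_of_pos (show (0:ℝ) < 1-β/2 by linarith)
        positivity
      rw [he, neg_one_mul, neg_mul, div_mul_div_comm, neg_div, neg_inj,
        div_eq_div_iff hd1 hd2]
      ring
    · have ihm := ih hm
      have hrec := gw_recurrence β hβ (le_of_lt hβ2) m
      have hpos : (0:ℝ) < (m:ℝ) + 1 + β/2 := by positivity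
      have hg : gw β ((m:ℤ)+1) = ((m:ℝ) - β/2) * gw β m / ((m:ℝ) + 1 + β/2) := by
        field_simp
        linarith [hrec]
      have hms : (0:ℝ) < (m:ℝ) - β/2 := by
        have : (1:ℝ) ≤ (m:ℝ) := by exact_mod_cast hm
        linarith
      have hG1 : Real.Gamma ((m:ℝ) + 1 - β/2) = ((m:ℝ) - β/2) * Real.Gamma ((m:ℝ) - β/2) := by
        rw [show (m:ℝ) + 1 - β/2 = ((m:ℝ) - β/2) + 1 by ring, Real.Gamma_add_one (ne_of_gt hms)]
      have hG2 : Real.Gamma ((m:ℝ) + 1 + 1 + β/2) = ((m:ℝ) + 1 + β/2) * Real.Gamma ((m:ℝ) + 1 + β/2) := by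
        rw [show (m:ℝ) + 1 + 1 + β/2 = ((m:ℝ) + 1 + β/2) + 1 by ring, Real.Gamma_add_one (ne_of_gt hpos)]
      rw [show ((m+1:ℕ):ℤ) = (m:ℤ)+1 by push_cast; ring, hg, ihm]
      push_cast
      rw [hG1, hG2]
      have hΓm : Real.Gamma ((m:ℝ) + 1 + β/2) ≠ 0 := ne_of_gt (Real.Gamma_pos_of_pos (by positivity))
      have ne3 : ((m:ℝ) + 1 + β/2) ≠ 0 := ne_of_gt hpos
      set C := Real.Gamma (β+1) / (Real.Gamma (β/2) * Real.Gamma (1-β/2)) with hC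
      set G1 := Real.Gamma ((m:ℝ) - β/2) with hG1'
      set G2 := Real.Gamma ((m:ℝ) + 1 + β/2) with hG2'
      field_simp

lemma Gamma_ratio_lower (β : ℝ) (hβ : 1 < β) (hβ2 : β < 2) (n : ℕ) (hn : 1 ≤ n) :
    ((n:ℝ) + 2) ^ (-(1+β)) ≤ Real.Gamma ((n:ℝ) - β/2) / Real.Gamma ((n:ℝ) + 1 + β/2) := by
  have hs1 : 1/2 < β/2 := by linarith
  have hs2 : β/2 < 1 := by linarith
  have hn1 : (1:ℝ) ≤ (n:ℝ) := by exact_mod_cast hn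
  set x := (n:ℝ) - β/2 with hx
  have hxpos : 0 < x := by rw [hx]; linarith
  set t := (1 + β)/3 with ht
  have ht0 : 0 ≤ t := by rw [ht]; linarith
  have ht1 : t ≤ 1 := by rw [ht]; linarith
  have hconv := Real.convexOn_log_Gamma
  have key := hconv.2 (Set.mem_Ioi.mpr hxpos) (Set.mem_Ioi.mpr (by linarith : (0:ℝ) < x + 3))
    (by linarith : (0:ℝ) ≤ 1 - t) ht0 (by ring)
  simp only [smul_eq_mul, Function.comp_apply] at key
  have hcomb : (1-t) * x + t * (x+3) = (n:ℝ) + 1 + β/2 := by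
    rw [ht, hx]; ring
  rw [hcomb] at key
  have hΓx : 0 < Real.Gamma x := Real.Gamma_pos_of_pos hxpos
  have hΓx3 : 0 < Real.Gamma (x+3) := Real.Gamma_pos_of_pos (by linarith)
  have hΓn : 0 < Real.Gamma ((n:ℝ) + 1 + β/2) := Real.Gamma_pos_of_pos (by positivity)
  have key2 : Real.Gamma ((n:ℝ)+1+β/2)
      ≤ Real.exp ((1-t) * Real.log (Real.Gamma x) + t * Real.log (Real.Gamma (x+3))) := by
    rw [← Real.exp_log hΓn]
    exact Real.exp_le_exp.mpr key
  have hexp : Real.Gamma ((n:ℝ)+1+β/2) ≤ (Real.Gamma x) ^ (1-t) * (Real.Gamma (x+3)) ^ t := by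
    rw [Real.rpow_def_of_pos hΓx, Real.rpow_def_of_pos hΓx3, ← Real.exp_add]
    convert key2 using 2
    ring
  set P := (x+2)*(x+1)*x with hP
  have hPpos : 0 < P := by rw [hP]; positivity
  have hG3 : Real.Gamma (x+3) = P * Real.Gamma x := by
    rw [show x+3 = (x+2)+1 by ring, Real.Gamma_add_one (by positivity),
      show x+2 = (x+1)+1 by ring, Real.Gamma_add_one (by positivity),
      Real.Gamma_add_one (ne_of_gt hxpos), hP]
    ring
  have e1 : (Real.Gamma x) ^ (1-t) * (Real.Gamma (x+3)) ^ t = Real.Gamma x * P ^ t := by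
    rw [hG3, Real.mul_rpow (le_of_lt hPpos) (le_of_lt hΓx)]
    rw [show (Real.Gamma x) ^ (1-t) * (P ^ t * (Real.Gamma x) ^ t)
        = ((Real.Gamma x) ^ (1-t) * (Real.Gamma x) ^ t) * P ^ t by ring]
    rw [← Real.rpow_add hΓx]
    norm_num
  have hprod : P ≤ ((n:ℝ)+2)^(3:ℕ) := by
    have h1 : x + 2 ≤ (n:ℝ) + 2 := by rw [hx]; linarith
    have h2 : x + 1 ≤ (n:ℝ) + 2 := by rw [hx]; linarith
    have h3 : x ≤ (n:ℝ) + 2 := by rw [hx]; linarith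
    have hp1 : (0:ℝ) < x + 1 := by linarith
    have hp2 : (0:ℝ) < x + 2 := by linarith
    rw [hP]
    have s1 : (x+2)*(x+1) ≤ ((n:ℝ)+2)*((n:ℝ)+2) :=
      mul_le_mul h1 h2 (le_of_lt hp1) (by linarith)
    calc (x+2)*(x+1)*x ≤ ((n:ℝ)+2)*((n:ℝ)+2)*((n:ℝ)+2) :=
      mul_le_mul s1 h3 (le_of_lt hxpos) (by positivity)
    _ = ((n:ℝ)+2)^(3:ℕ) := by ring
  have hPt : P ^ t ≤ ((n:ℝ)+2) ^ (1+β) := by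
    calc P ^ t ≤ (((n:ℝ)+2)^(3:ℕ)) ^ t := Real.rpow_le_rpow (le_of_lt hPpos) hprod ht0
    _ = ((n:ℝ)+2) ^ ((3:ℝ) * t) := by
        rw [← Real.rpow_natCast ((n:ℝ)+2) 3, ← Real.rpow_mul (by positivity)]
        norm_num
    _ = ((n:ℝ)+2) ^ (1+β) := by rw [show (3:ℝ)*t = 1+β by rw [ht]; ring]
  have hbound : Real.Gamma ((n:ℝ)+1+β/2) ≤ Real.Gamma x * ((n:ℝ)+2)^(1+β) := by
    calc Real.Gamma ((n:ℝ)+1+β/2) ≤ (Real.Gamma x) ^ (1-t) * (Real.Gamma (x+3)) ^ t := hexp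
    _ = Real.Gamma x * P ^ t := e1
    _ ≤ Real.Gamma x * ((n:ℝ)+2)^(1+β) := by
        exact mul_le_mul_of_nonneg_left hPt (le_of_lt hΓx)
  have hA : (0:ℝ) < ((n:ℝ)+2)^(1+β) := Real.rpow_pos_of_pos (by positivity) _
  rw [Real.rpow_neg (by positivity), le_div_iff₀ hΓn, inv_mul_le_iff₀ hA]
  exact le_of_le_of_eq hbound (mul_comm _ _)







lemma term_nonneg (β : ℝ) (hβ : 1 < β) (hβ2 : β ≤ 2) (N : ℕ) :
    0 ≤ ((β/2) - N) * gw β N := by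
  rcases Nat.eq_zero_or_pos N with h | h
  · subst h
    have := gw_zero_pos β (by linarith)
    push_cast
    nlinarith
  · have h1 : gw β N ≤ 0 := gw_nat_nonpos β hβ hβ2 N h
    have h2 : (β/2) - (N:ℝ) ≤ 0 := by
      have : (1:ℝ) ≤ (N:ℝ) := by exact_mod_cast h
      linarith
    nlinarith

lemma cβ_pos (β : ℝ) (hβ : 1 < β) (hβ2 : β < 2) : 0 < cβ β := by
  unfold cβ
  have h1 := Real.Gamma_pos_of_pos (show (0:ℝ) < β + 1 by linarith)
  have h2 := Real.Gamma_pos_of_pos (show (0:ℝ) < β/2 by linarith)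
  have h3 := Real.Gamma_pos_of_pos (show (0:ℝ) < 1 - β/2 by linarith)
  positivity

lemma γβ_pos (β : ℝ) (hβ : 1 < β) (hβ2 : β < 2) : 0 < γβ β := by
  unfold γβ
  have := cβ_pos β hβ hβ2
  have h3 : (0:ℝ) < (3:ℝ) ^ (-(1+β)) := Real.rpow_pos_of_pos (by norm_num) _
  have : (0:ℝ) < 1 - β/2 := by linarith
  positivity

/-- Nonnegativity of truncated weight sums (β ∈ (1,2]). -/
lemma sum_Icc_nonneg (β : ℝ) (hβ : 1 < β) (hβ2 : β ≤ 2) (m j : ℕ) :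
    0 ≤ ∑ k ∈ Finset.Icc (-(m:ℤ)) (j:ℤ), gw β k := by
  rw [sum_Icc_gw]
  have hβ0 : (0:ℝ) < β := by linarith
  have hj := Pz_closed β hβ hβ2 j
  have hm := Pz_closed β hβ hβ2 m
  have h0 := Pz_closed β hβ hβ2 0
  have t1 := term_nonneg β hβ hβ2 j
  have t2 := term_nonneg β hβ hβ2 m
  have hg0 := gw_zero_pos β hβ0
  nlinarith

/-- Quantitative lower bound (β < 2, interior). -/
lemma sum_Icc_lower (β : ℝ) (hβ : 1 < β) (hβ2 : β < 2) (m j : ℕ) (hj : 1 ≤ j) (hm : 1 ≤ m) :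
    γβ β * (((j:ℝ) + m)) ^ (-β) ≤ ∑ k ∈ Finset.Icc (-(m:ℤ)) (j:ℤ), gw β k := by
  have hβ0 : (0:ℝ) < β := by linarith
  have hj1 : (1:ℝ) ≤ (j:ℝ) := by exact_mod_cast hj
  have hjpos : (0:ℝ) < (j:ℝ) := by linarith
  have hjm : (0:ℝ) < (j:ℝ) + m := by positivity
  -- step 1 : 2s Σ ≥ (j - s)(-gw j)
  have e1 : 2 * (β/2) * (∑ k ∈ Finset.Icc (-(m:ℤ)) (j:ℤ), gw β k)
      = ((β/2) - j) * gw β j + ((β/2) - m) * gw β m := by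
    rw [sum_Icc_gw]
    have hj' := Pz_closed β hβ (le_of_lt hβ2) j
    have hm' := Pz_closed β hβ (le_of_lt hβ2) m
    have h0 := Pz_closed β hβ (le_of_lt hβ2) 0
    have hg0 : ((β/2) - (0:ℕ)) * gw β 0 = (β/2) * gw β 0 := by push_cast; ring
    nlinarith [hj', hm', h0]
  have t2 := term_nonneg β hβ (le_of_lt hβ2) m
  -- step 2 : (j-s)(-gw j) ≥ (1-s) j * c₀ (j+2)^{-(1+β)}
  have hgj : -(gw β j) = cβ β * (Real.Gamma ((j:ℝ) - β/2) / Real.Gamma ((j:ℝ) + 1 + β/2)) := by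
    rw [gw_closed β hβ hβ2 j hj]; ring
  have hc := cβ_pos β hβ hβ2
  have hratio := Gamma_ratio_lower β hβ hβ2 j hj
  have hgj_low : cβ β * ((j:ℝ) + 2) ^ (-(1+β)) ≤ -(gw β j) := by
    rw [hgj]
    exact mul_le_mul_of_nonneg_left hratio (le_of_lt hc)
  have hcoef : (1 - β/2) * (j:ℝ) ≤ (j:ℝ) - β/2 := by nlinarith
  have hcoef0 : (0:ℝ) ≤ (1 - β/2) * (j:ℝ) := by nlinarith
  have hgj_nonneg : (0:ℝ) ≤ -(gw β j) := by
    have := gw_nat_nonpos β hβ (le_of_lt hβ2) j hj; linarith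
  have step2 : (1 - β/2) * (j:ℝ) * (cβ β * ((j:ℝ) + 2) ^ (-(1+β)))
      ≤ ((j:ℝ) - β/2) * (-(gw β j)) := by
    apply mul_le_mul hcoef hgj_low
      (mul_nonneg (le_of_lt hc) (le_of_lt (Real.rpow_pos_of_pos (by positivity) _)))
      (by linarith)
  -- step 3 : (j+2)^{-(1+β)} ≥ 3^{-(1+β)} j^{-(1+β)}
  have h32 : ((j:ℝ) + 2) ^ (-(1+β)) ≥ ((3:ℝ) * j) ^ (-(1+β)) := by
    apply Real.rpow_le_rpow_of_nonpos (by positivity) (by linarith) (by linarith)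
  have h33 : ((3:ℝ) * j) ^ (-(1+β)) = (3:ℝ) ^ (-(1+β)) * (j:ℝ) ^ (-(1+β)) :=
    Real.mul_rpow (by norm_num) (by positivity)
  -- step 4 : j * j^{-(1+β)} = j^{-β} ≥ (j+m)^{-β}
  have h41 : (j:ℝ) * (j:ℝ) ^ (-(1+β)) = (j:ℝ) ^ (-β) := by
    nth_rewrite 1 [← Real.rpow_one (j:ℝ)]
    rw [← Real.rpow_add hjpos]
    norm_num
  have h42 : ((j:ℝ) + m) ^ (-β) ≤ (j:ℝ) ^ (-β) := by
    apply Real.rpow_le_rpow_of_nonpos hjpos (by linarith [Nat.cast_nonneg (α := ℝ) m]) (by linarith)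
  -- combine
  have key : (1 - β/2) * cβ β * (3:ℝ) ^ (-(1+β)) * ((j:ℝ) + m) ^ (-β)
      ≤ 2 * (β/2) * (∑ k ∈ Finset.Icc (-(m:ℤ)) (j:ℤ), gw β k) := by
    rw [e1]
    have c1 : (1 - β/2) * cβ β * (3:ℝ) ^ (-(1+β)) * ((j:ℝ) + m) ^ (-β)
        ≤ (1 - β/2) * cβ β * (3:ℝ) ^ (-(1+β)) * ((j:ℝ) ^ (-β)) := by
      apply mul_le_mul_of_nonneg_left h42
      have h3p : (0:ℝ) < (3:ℝ) ^ (-(1+β)) := Real.rpow_pos_of_pos (by norm_num) _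
      exact mul_nonneg (mul_nonneg (by linarith) (le_of_lt hc)) (le_of_lt h3p)
    have c2 : (1 - β/2) * cβ β * (3:ℝ) ^ (-(1+β)) * ((j:ℝ) ^ (-β))
        ≤ ((j:ℝ) - β/2) * (-(gw β j)) := by
      calc (1 - β/2) * cβ β * (3:ℝ) ^ (-(1+β)) * ((j:ℝ) ^ (-β))
          = (1 - β/2) * (j:ℝ) * (cβ β * ((3:ℝ) ^ (-(1+β)) * (j:ℝ) ^ (-(1+β)))) := by
            rw [← h41]; ring
        _ = (1 - β/2) * (j:ℝ) * (cβ β * (((3:ℝ) * j) ^ (-(1+β)))) := by rw [h33]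
        _ ≤ (1 - β/2) * (j:ℝ) * (cβ β * (((j:ℝ) + 2) ^ (-(1+β)))) := by
            apply mul_le_mul_of_nonneg_left _ hcoef0
            exact mul_le_mul_of_nonneg_left h32 (le_of_lt hc)
        _ ≤ ((j:ℝ) - β/2) * (-(gw β j)) := step2
    nlinarith [c1, c2]
  have : γβ β * (((j:ℝ) + m)) ^ (-β) = ((1 - β/2) * cβ β * (3:ℝ) ^ (-(1+β)) * ((j:ℝ) + m) ^ (-β)) / β := by
    unfold γβ; ring
  rw [this]
  rw [div_le_iff₀ hβ0]
  calc (1 - β/2) * cβ β * (3:ℝ) ^ (-(1+β)) * ((j:ℝ) + m) ^ (-β)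
      ≤ 2 * (β/2) * (∑ k ∈ Finset.Icc (-(m:ℤ)) (j:ℤ), gw β k) := key
    _ = (∑ k ∈ Finset.Icc (-(m:ℤ)) (j:ℤ), gw β k) * β := by ring






lemma gw_int_nonpos (β : ℝ) (hβ : 1 < β) (hβ2 : β ≤ 2) (k : ℤ) (hk : k ≠ 0) : gw β k ≤ 0 := by
  rcases lt_or_gt_of_ne hk with h | h
  · have : gw β k = gw β ((-k).toNat) := by
      rw [show ((-k).toNat : ℤ) = -k by omega, gw_neg]
    rw [this]
    exact gw_nat_nonpos β hβ hβ2 _ (by omega)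
  · have : gw β k = gw β (k.toNat) := by rw [show ((k).toNat : ℤ) = k by omega]
    rw [this]
    exact gw_nat_nonpos β hβ hβ2 _ (by omega)

lemma cos_neg_of (β : ℝ) (hβ : 1 < β) (hβ2 : β ≤ 2) : Real.cos (β * Real.pi / 2) < 0 := by
  apply Real.cos_neg_of_pi_div_two_lt_of_lt
  · have := Real.pi_pos
    nlinarith
  · have := Real.pi_pos
    nlinarith

lemma sum_range_shift (f : ℤ → ℝ) (c : ℤ) (N : ℕ) :
    ∑ n ∈ Finset.range N, f (c - n) = ∑ k ∈ Finset.Icc (c - N + 1) c, f k := by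
  induction N with
  | zero =>
    simp only [Finset.range_zero, Finset.sum_empty]
    rw [show c - (0:ℕ) + 1 = c + 1 by push_cast; ring]
    rw [Finset.Icc_eq_empty (by omega)]
    simp
  | succ n ih =>
    rw [Finset.sum_range_succ, ih]
    have hins : Finset.Icc (c - (n+1:ℕ) + 1) c = insert (c - n) (Finset.Icc (c - (n:ℕ) + 1) c) := by
      ext k
      simp only [Finset.mem_Icc, Finset.mem_insert]
      push_cast
      omega
    rw [hins, Finset.sum_insert (by simp only [Finset.mem_Icc]; omega)]
    ring

theorem part_one (β a b : ℝ) (hβ : β ∈ Set.Ioc (1 : ℝ) 2) (hab : a < b)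
    (α : ℝ) (hα : 0 < α) (M : ℕ) (hM : 2 ≤ M) :
    IsUnit (Matrix.of fun i l : Fin (M - 1) =>
        (if i = l then α else 0)
          + Real.cos (β * Real.pi / 2) * ((b - a) / M) ^ (-β) * fcd β ((i : ℤ) - (l : ℤ))) := by
  obtain ⟨hβ1, hβ2⟩ := hβ
  set H : ℝ := ((b - a) / M) ^ (-β) with hH
  have hHpos : 0 < H := by
    apply Real.rpow_pos_of_pos
    have : (0:ℝ) < (M:ℝ) := by positivity
    have : (0:ℝ) < b - a := by linarith
    positivity
  set c : ℝ := -Real.cos (β * Real.pi / 2) with hc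
  have hcpos : 0 < c := by
    rw [hc]
    have := cos_neg_of β hβ1 hβ2
    linarith
  rw [Matrix.isUnit_iff_isUnit_det, isUnit_iff_ne_zero]
  intro hdet
  obtain ⟨v, hv, hmul⟩ := Matrix.exists_mulVec_eq_zero_iff.mpr hdet
  -- maximizer of |v|
  have hne : (Finset.univ : Finset (Fin (M-1))).Nonempty := by
    rw [Finset.univ_nonempty_iff]
    exact Fin.pos_iff_nonempty.mp (by omega)
  obtain ⟨i₀, _, hmax⟩ := Finset.exists_max_image Finset.univ (fun l => |v l|) hne
  have hvi₀ : 0 < |v i₀| := by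
    rcases Function.ne_iff.mp hv with ⟨l, hl⟩
    exact lt_of_lt_of_le (abs_pos.mpr hl) (hmax l (Finset.mem_univ l))
  -- key contradiction machine
  have key : ∀ w : Fin (M-1) → ℝ,
      (Matrix.of fun i l : Fin (M - 1) =>
        (if i = l then α else 0)
          + Real.cos (β * Real.pi / 2) * H * fcd β ((i : ℤ) - (l : ℤ))).mulVec w = 0 →
      (∀ l, w l ≤ w i₀) → 0 < w i₀ → False := by
    intro w hw hwle hwpos
    have hrow := congrFun hw i₀
    rw [Matrix.mulVec, dotProduct] at hrow
    simp only [Matrix.of_apply, Pi.zero_apply] at hrow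
    have hsplit : ∑ l : Fin (M-1), ((if i₀ = l then α else 0)
        + Real.cos (β * Real.pi / 2) * H * fcd β ((i₀ : ℤ) - (l : ℤ))) * w l
        = α * w i₀ + c * H * ∑ l : Fin (M-1), gw β ((i₀ : ℤ) - (l : ℤ)) * w l := by
      simp only [add_mul]
      rw [Finset.sum_add_distrib]
      congr 1
      · simp [ite_mul]
      · rw [Finset.mul_sum]
        apply Finset.sum_congr rfl
        intro l _
        rw [fcd_eq, hc]
        ring
    rw [hsplit] at hrow
    -- lower bound the sum
    have hterm : ∀ l : Fin (M-1), gw β ((i₀ : ℤ) - (l : ℤ)) * w i₀ ≤ gw β ((i₀ : ℤ) - (l : ℤ)) * w l := by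
      intro l
      by_cases h : (i₀ : ℤ) = (l : ℤ)
      · rw [h]
        have : i₀ = l := by
          apply Fin.ext
          exact_mod_cast h
        rw [this]
      · have hg := gw_int_nonpos β hβ1 hβ2 ((i₀ : ℤ) - (l : ℤ)) (by omega)
        nlinarith [hwle l]
    have hsum1 : (∑ l : Fin (M-1), gw β ((i₀ : ℤ) - (l : ℤ))) * w i₀ ≤ ∑ l : Fin (M-1), gw β ((i₀ : ℤ) - (l : ℤ)) * w l := by
      rw [Finset.sum_mul]
      exact Finset.sum_le_sum (fun l _ => hterm l)
    -- the weight sum is nonneg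
    have hreindex : ∑ l : Fin (M-1), gw β ((i₀ : ℤ) - (l : ℤ))
        = ∑ k ∈ Finset.Icc (-((M - 2 - (i₀:ℕ) : ℕ) : ℤ)) ((i₀:ℕ) : ℤ), gw β k := by
      rw [Fin.sum_univ_eq_sum_range (fun n => gw β ((i₀ : ℤ) - (n : ℤ))) (M-1)]
      rw [sum_range_shift (gw β) ((i₀:ℕ):ℤ) (M-1)]
      congr 1
      have hi := i₀.isLt
      congr 1
      omega
    have hwsum : 0 ≤ ∑ l : Fin (M-1), gw β ((i₀ : ℤ) - (l : ℤ)) := by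
      rw [hreindex]
      exact sum_Icc_nonneg β hβ1 hβ2 _ _
    have : 0 < α * w i₀ + c * H * ∑ l : Fin (M-1), gw β ((i₀ : ℤ) - (l : ℤ)) * w l := by
      have h1 : 0 ≤ c * H * ∑ l : Fin (M-1), gw β ((i₀ : ℤ) - (l : ℤ)) * w l := by
        apply mul_nonneg (by positivity)
        calc (0:ℝ) ≤ (∑ l : Fin (M-1), gw β ((i₀ : ℤ) - (l : ℤ))) * w i₀ :=
          mul_nonneg hwsum (le_of_lt hwpos)
        _ ≤ _ := hsum1
      nlinarith
    rw [hrow] at this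
    exact lt_irrefl 0 this
  rcases le_or_gt 0 (v i₀) with h | h
  · apply key v hmul
    · intro l
      calc v l ≤ |v l| := le_abs_self _
      _ ≤ |v i₀| := hmax l (Finset.mem_univ l)
      _ = v i₀ := abs_of_nonneg h
    · rwa [← abs_of_nonneg h]
  · apply key (-v)
    · rw [Matrix.mulVec_neg, hmul, neg_zero]
    · intro l
      simp only [Pi.neg_apply]
      calc -v l ≤ |v l| := neg_le_abs _
      _ ≤ |v i₀| := hmax l (Finset.mem_univ l)
      _ = -v i₀ := abs_of_neg h
    · simp only [Pi.neg_apply]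
      linarith





theorem upper_lt2 (β a b : ℝ) (hβ1 : 1 < β) (hβ2 : β < 2) (hab : a < b)
    (α : ℝ) (hα : 0 < α) (M : ℕ) (hM : 2 ≤ M) (c : ℝ) (hcpos : 0 < c)
    (u f : ℕ → ℝ) (F : ℝ) (hF : 0 ≤ F) (hu0 : u 0 = 0) (huM : u M = 0)
    (hsch : ∀ j : ℕ, 1 ≤ j → j ≤ M - 1 →
      α * u j + c * ((b - a) / M) ^ (-β) *
          ∑ k ∈ Finset.Icc ((j : ℤ) - M) (j : ℤ), gw β k * u ((j : ℤ) - k).toNat = f j)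
    (hfF : ∀ j : ℕ, 1 ≤ j → j ≤ M - 1 → f j ≤ F) :
    ∀ j : ℕ, j ≤ M → u j ≤ (b-a) ^ β / (c * γβ β) * F := by
  have hba : (0:ℝ) < b - a := by linarith
  have hγ := γβ_pos β hβ1 hβ2
  have hC : (0:ℝ) < (b-a) ^ β / (c * γβ β) := by positivity
  -- maximizer
  obtain ⟨j₀, hj₀mem, hj₀max⟩ := Finset.exists_max_image (Finset.range (M+1)) u
    (by exact ⟨0, Finset.mem_range.mpr (by omega)⟩)
  have hj₀M : j₀ ≤ M := by
    have := Finset.mem_range.mp hj₀mem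
    omega
  have hmax : ∀ j : ℕ, j ≤ M → u j ≤ u j₀ := fun j hj =>
    hj₀max j (Finset.mem_range.mpr (by omega))
  rcases le_or_gt (u j₀) 0 with h0 | h0
  · intro j hj
    have := hmax j hj
    nlinarith
  -- u j₀ > 0 : interior
  have hj₀0 : j₀ ≠ 0 := by
    intro h
    rw [h, hu0] at h0
    exact lt_irrefl 0 h0
  have hj₀Mne : j₀ ≠ M := by
    intro h
    rw [h, huM] at h0
    exact lt_irrefl 0 h0
  have hj1 : 1 ≤ j₀ := by omega
  have hj2 : j₀ ≤ M - 1 := by omega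
  have heq := hsch j₀ hj1 hj2
  set H : ℝ := ((b - a) / M) ^ (-β) with hH
  have hMpos : (0:ℝ) < (M:ℝ) := by positivity
  have hHpos : 0 < H := Real.rpow_pos_of_pos (by positivity) _
  set m : ℕ := M - j₀ with hm
  have hmeq : (j₀ : ℤ) - M = -(m : ℤ) := by omega
  have hm1 : 1 ≤ m := by omega
  -- termwise comparison
  have hterm : ∀ k ∈ Finset.Icc ((j₀ : ℤ) - M) (j₀ : ℤ),
      gw β k * u j₀ ≤ gw β k * u (((j₀ : ℤ) - k).toNat) := by
    intro k hk
    rw [Finset.mem_Icc] at hk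
    by_cases h : k = 0
    · rw [h]
      norm_num
    · have hg := gw_int_nonpos β hβ1 (le_of_lt hβ2) k h
      have hle : (((j₀ : ℤ) - k).toNat) ≤ M := by omega
      have := hmax _ hle
      nlinarith
  have hsum1 : (∑ k ∈ Finset.Icc ((j₀ : ℤ) - M) (j₀ : ℤ), gw β k) * u j₀
      ≤ ∑ k ∈ Finset.Icc ((j₀ : ℤ) - M) (j₀ : ℤ), gw β k * u (((j₀ : ℤ) - k).toNat) := by
    rw [Finset.sum_mul]
    exact Finset.sum_le_sum hterm
  -- weight sum lower bound
  have hws : γβ β * ((M:ℝ)) ^ (-β) ≤ ∑ k ∈ Finset.Icc ((j₀ : ℤ) - M) (j₀ : ℤ), gw β k := by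
    rw [hmeq]
    have := sum_Icc_lower β hβ1 hβ2 m j₀ hj1 hm1
    have hcast : ((j₀:ℝ) + m) = (M:ℝ) := by
      have : j₀ + m = M := by omega
      exact_mod_cast this
    rwa [hcast] at this
  -- combine
  have hHM : H * (M:ℝ) ^ (-β) = (b-a) ^ (-β) := by
    rw [hH, ← Real.mul_rpow (by positivity) (by positivity)]
    congr 1
    field_simp
  have hchain : c * γβ β * (b-a) ^ (-β) * u j₀ ≤ f j₀ := by
    rw [← heq]
    have s1 : γβ β * ((M:ℝ)) ^ (-β) * u j₀
        ≤ ∑ k ∈ Finset.Icc ((j₀ : ℤ) - M) (j₀ : ℤ), gw β k * u (((j₀ : ℤ) - k).toNat) := by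
      calc γβ β * ((M:ℝ)) ^ (-β) * u j₀
          ≤ (∑ k ∈ Finset.Icc ((j₀ : ℤ) - M) (j₀ : ℤ), gw β k) * u j₀ :=
            mul_le_mul_of_nonneg_right hws (le_of_lt h0)
        _ ≤ _ := hsum1
    have s2 : c * H * (γβ β * ((M:ℝ)) ^ (-β) * u j₀)
        ≤ c * H * ∑ k ∈ Finset.Icc ((j₀ : ℤ) - M) (j₀ : ℤ), gw β k * u (((j₀ : ℤ) - k).toNat) :=
      mul_le_mul_of_nonneg_left s1 (by positivity)
    have e2 : c * H * (γβ β * ((M:ℝ)) ^ (-β) * u j₀) = c * γβ β * (b-a) ^ (-β) * u j₀ := by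
      rw [← hHM]; ring
    nlinarith [mul_pos hα h0]
  have hfj := hfF j₀ hj1 hj2
  -- solve for u j₀
  have hba2 : (0:ℝ) < c * γβ β * (b-a) ^ (-β) := by
    have := Real.rpow_pos_of_pos hba (-β)
    positivity
  have hinv : (b-a) ^ (-β) = ((b-a) ^ β)⁻¹ := Real.rpow_neg (le_of_lt hba) β
  have hub : u j₀ ≤ (b-a) ^ β / (c * γβ β) * F := by
    have h1 : c * γβ β * (b-a) ^ (-β) * u j₀ ≤ F := le_trans hchain hfj
    have hbp : (0:ℝ) < (b-a) ^ β := Real.rpow_pos_of_pos hba β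
    rw [hinv] at h1 hba2
    rw [div_mul_eq_mul_div, le_div_iff₀ (by positivity)]
    calc u j₀ * (c * γβ β) = (c * γβ β * ((b-a)^β)⁻¹ * u j₀) * (b-a)^β := by
          field_simp
      _ ≤ F * (b-a)^β := mul_le_mul_of_nonneg_right h1 (le_of_lt hbp)
      _ = (b-a)^β * F := mul_comm _ _
  intro j hj
  exact le_trans (hmax j hj) hub




lemma Gamma_three : Real.Gamma 3 = 2 := by
  rw [show (3:ℝ) = 2 + 1 by norm_num, Real.Gamma_add_one (by norm_num),
    show (2:ℝ) = 1 + 1 by norm_num, Real.Gamma_add_one (by norm_num), Real.Gamma_one]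
  norm_num

lemma gw2_zero : gw 2 0 = 2 := by
  unfold gw
  norm_num

lemma gw2_one : gw 2 1 = -1 := by
  unfold gw
  rw [show (2:ℝ)/2 - ((1:ℤ):ℝ) + 1 = 1 by push_cast; ring, show (2:ℝ)/2 + ((1:ℤ):ℝ) + 1 = 3 by push_cast; ring,
    show (2:ℝ) + 1 = 3 by norm_num, Gamma_three, Real.Gamma_one]
  norm_num

lemma gw2_big (k : ℤ) (hk : 2 ≤ |k|) : gw 2 k = 0 := by
  have main : ∀ k : ℤ, 2 ≤ k → gw 2 k = 0 := by
    intro k hk2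
    unfold gw
    have h1 : (2:ℝ)/2 - (k:ℝ) + 1 = -(((k - 2).toNat : ℕ) : ℝ) := by
      have : (((k-2).toNat : ℕ) : ℝ) = (k:ℝ) - 2 := by
        have : (((k-2).toNat : ℕ) : ℤ) = k - 2 := by omega
        exact_mod_cast this
      rw [this]; ring
    rw [h1, Real.Gamma_neg_nat_eq_zero]
    simp
  rcases le_abs.mp hk with h | h
  · exact main k h
  · rw [← gw_neg]
    exact main (-k) h

theorem upper_eq2 (a b : ℝ) (hab : a < b)
    (α : ℝ) (hα : 0 < α) (M : ℕ) (hM : 2 ≤ M) (c : ℝ) (hcpos : 0 < c)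
    (u f : ℕ → ℝ) (F : ℝ) (hF : 0 ≤ F) (hu0 : u 0 = 0) (huM : u M = 0)
    (hsch : ∀ j : ℕ, 1 ≤ j → j ≤ M - 1 →
      α * u j + c * ((b - a) / M) ^ (-(2:ℝ)) *
          ∑ k ∈ Finset.Icc ((j : ℤ) - M) (j : ℤ), gw 2 k * u ((j : ℤ) - k).toNat = f j)
    (hfF : ∀ j : ℕ, 1 ≤ j → j ≤ M - 1 → f j ≤ F) :
    ∀ j : ℕ, j ≤ M → u j ≤ (b-a)^(2:ℕ) / (8 * c) * F := by
  have hba : (0:ℝ) < b - a := by linarith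
  have hMpos : (0:ℝ) < (M:ℝ) := by positivity
  set H : ℝ := ((b - a) / M) ^ (-(2:ℝ)) with hH
  have hHpos : 0 < H := Real.rpow_pos_of_pos (by positivity) _
  set K : ℝ := F / (2 * c * H) with hK
  have hKnn : 0 ≤ K := div_nonneg hF (by positivity)
  set p : ℕ → ℝ := fun i => (i:ℝ) * ((M:ℝ) - i) with hp
  have hpnn : ∀ i : ℕ, i ≤ M → 0 ≤ p i := by
    intro i hi
    have : (i:ℝ) ≤ (M:ℝ) := by exact_mod_cast hi
    rw [hp]
    simp only
    have : (0:ℝ) ≤ (i:ℝ) := by positivity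
    apply mul_nonneg this
    linarith
  -- sum collapse
  have hcollapse : ∀ j : ℕ, 1 ≤ j → j ≤ M - 1 →
      ∑ k ∈ Finset.Icc ((j : ℤ) - M) (j : ℤ), gw 2 k * u ((j : ℤ) - k).toNat
        = 2 * u j - u (j+1) - u (j-1) := by
    intro j h1 h2
    have hsub : ({-1, 0, 1} : Finset ℤ) ⊆ Finset.Icc ((j : ℤ) - M) (j : ℤ) := by
      intro k hk
      fin_cases hk <;> (rw [Finset.mem_Icc]; omega)
    rw [← Finset.sum_subset hsub (fun k hk hk2 => by
      have : gw 2 k = 0 := by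
        apply gw2_big
        rw [le_abs]
        simp only [Finset.mem_insert, Finset.mem_singleton] at hk2
        omega
      rw [this, zero_mul])]
    rw [show ({-1, 0, 1} : Finset ℤ) = insert (-1) (insert 0 {1}) by rfl]
    rw [Finset.sum_insert (by norm_num), Finset.sum_insert (by norm_num), Finset.sum_singleton]
    rw [show gw 2 (-1) = -1 by rw [show (-1:ℤ) = -(1:ℤ) by ring, gw_neg]; exact gw2_one]
    rw [gw2_zero, gw2_one]
    rw [show ((j:ℤ) - (-1)).toNat = j + 1 by omega,
      show ((j:ℤ) - 0).toNat = j by omega,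
      show ((j:ℤ) - 1).toNat = j - 1 by omega]
    ring
  -- max of v
  set v : ℕ → ℝ := fun i => u i - K * p i with hv
  obtain ⟨j₀, hj₀mem, hj₀max⟩ := Finset.exists_max_image (Finset.range (M+1)) v
    (by exact ⟨0, Finset.mem_range.mpr (by omega)⟩)
  have hj₀M : j₀ ≤ M := by
    have := Finset.mem_range.mp hj₀mem
    omega
  have hmaxv : ∀ j : ℕ, j ≤ M → v j ≤ v j₀ := fun j hj =>
    hj₀max j (Finset.mem_range.mpr (by omega))
  have hv0 : v 0 = 0 := by
    rw [hv]; simp only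
    rw [hu0, hp]; simp
  have hvM : v M = 0 := by
    rw [hv]; simp only
    rw [huM, hp]; simp
  have hvneg : v j₀ ≤ 0 := by
    by_contra hcon
    push_neg at hcon
    have hj₀0 : j₀ ≠ 0 := by
      intro h; rw [h, hv0] at hcon; exact lt_irrefl 0 hcon
    have hj₀Mne : j₀ ≠ M := by
      intro h; rw [h, hvM] at hcon; exact lt_irrefl 0 hcon
    have hj1 : 1 ≤ j₀ := by omega
    have hj2 : j₀ ≤ M - 1 := by omega
    have heq := hsch j₀ hj1 hj2
    rw [hcollapse j₀ hj1 hj2] at heq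
    -- parabola second difference
    have hpd : 2 * p j₀ - p (j₀+1) - p (j₀-1) = 2 := by
      rw [hp]
      simp only
      have c1 : ((j₀+1:ℕ):ℝ) = (j₀:ℝ) + 1 := by push_cast; ring
      have c2 : ((j₀-1:ℕ):ℝ) = (j₀:ℝ) - 1 := by
        have : ((j₀-1:ℕ):ℤ) = (j₀:ℤ) - 1 := by omega
        exact_mod_cast this
      rw [c1, c2]
      ring
    have hd1 : u (j₀+1) - K * p (j₀+1) ≤ u j₀ - K * p j₀ := hmaxv (j₀+1) (by omega)
    have hd2 : u (j₀-1) - K * p (j₀-1) ≤ u j₀ - K * p j₀ := hmaxv (j₀-1) (by omega)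
    have hdd : 2 * u j₀ - u (j₀+1) - u (j₀-1) ≥ 2 * K := by
      nlinarith [hpd]
    have hupos : 0 < u j₀ := by
      have hq1 := hpnn j₀ hj₀M
      have hq2 : 0 ≤ K * p j₀ := mul_nonneg hKnn hq1
      have hvj := hcon
      rw [hv] at hvj
      simp only at hvj
      linarith
    have h2KH : c * H * (2 * K) = F := by
      rw [hK]
      field_simp
    have : F < f j₀ := by
      rw [← heq]
      have : c * H * (2 * u j₀ - u (j₀+1) - u (j₀-1)) ≥ c * H * (2 * K) :=
        mul_le_mul_of_nonneg_left hdd (by positivity)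
      nlinarith [mul_pos hα hupos]
    have := hfF j₀ hj1 hj2
    linarith
  -- conclude
  intro j hj
  have h1 : v j ≤ 0 := le_trans (hmaxv j hj) hvneg
  have h2 : u j ≤ K * p j := by
    rw [hv] at h1
    simp only at h1
    linarith
  have h3 : p j ≤ (M:ℝ)^(2:ℕ) / 4 := by
    rw [hp]
    simp only
    have hjM : (j:ℝ) ≤ (M:ℝ) := by exact_mod_cast hj
    have : (0:ℝ) ≤ (j:ℝ) := by positivity
    nlinarith [sq_nonneg ((M:ℝ) - 2*(j:ℝ))]
  have hMne : (M:ℝ) ≠ 0 := ne_of_gt hMpos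
  have hxpos : (0:ℝ) < (b-a)/(M:ℝ) := by positivity
  have hHeq : H = (((b-a)/(M:ℝ))^(2:ℕ))⁻¹ := by
    rw [hH, Real.rpow_neg (le_of_lt hxpos), show ((2:ℝ)) = ((2:ℕ):ℝ) by norm_num,
      Real.rpow_natCast]
  have e : K * ((M:ℝ)^(2:ℕ)/4) = (b-a)^(2:ℕ)/(8*c)*F := by
    rw [hK, hHeq]
    have hne : ((b-a)/(M:ℝ))^(2:ℕ) ≠ 0 := by positivity
    field_simp
    ring
  calc u j ≤ K * p j := h2
    _ ≤ K * ((M:ℝ)^(2:ℕ)/4) := mul_le_mul_of_nonneg_left h3 hKnn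
    _ = (b-a)^(2:ℕ)/(8*c)*F := e

/-- Unique solvability and unconditional stability of the FCD scheme: the coefficient
matrix (with index `i : Fin (M-1)` corresponding to grid index `j = i + 1`) is invertible,
and the stability constant `C` depends only on `a`, `b`, `β`, being independent of the
mesh size `h = (b-a)/M` and of `α`. -/
theorem fcd_scheme_solvable_stable (β a b : ℝ) (hβ : β ∈ Set.Ioc (1 : ℝ) 2) (hab : a < b) :
    (∀ α : ℝ, 0 < α → ∀ M : ℕ, 2 ≤ M →
      IsUnit (Matrix.of fun i l : Fin (M - 1) =>
        (if i = l then α else 0)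
          + Real.cos (β * Real.pi / 2) * ((b - a) / M) ^ (-β) * fcd β ((i : ℤ) - (l : ℤ)))) ∧
    (∃ C > (0 : ℝ), ∀ α : ℝ, 0 < α → ∀ M : ℕ, 2 ≤ M →
      ∀ f u : ℕ → ℝ, ∀ F : ℝ,
        u 0 = 0 → u M = 0 →
        (∀ j : ℕ, 1 ≤ j → j ≤ M - 1 →
          α * u j + Real.cos (β * Real.pi / 2) * ((b - a) / M) ^ (-β) *
              ∑ k ∈ Finset.Icc ((j : ℤ) - M) (j : ℤ), fcd β k * u ((j : ℤ) - k).toNat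
            = f j) →
        (∀ j : ℕ, 1 ≤ j → j ≤ M - 1 → |f j| ≤ F) →
        ∀ j : ℕ, j ≤ M → |u j| ≤ C * F) := by
  constructor
  · intro α hα M hM
    exact part_one β a b hβ hab α hα M hM
  obtain ⟨hβ1, hβ2⟩ := hβ
  have hba : (0:ℝ) < b - a := by linarith
  by_cases hβeq : β = 2
  · -- classical case β = 2
    subst hβeq
    refine ⟨(b-a)^(2:ℕ)/8, by positivity, ?_⟩
    intro α hα M hM f u F hu0 huM hsch hfF
    have hcos : Real.cos (2 * Real.pi / 2) = -1 := by
      rw [show (2:ℝ) * Real.pi / 2 = Real.pi by ring, Real.cos_pi]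
    have hF : 0 ≤ F := le_trans (abs_nonneg _) (hfF 1 le_rfl (by omega))
    have hconv : ∀ (w g : ℕ → ℝ),
        (∀ j : ℕ, 1 ≤ j → j ≤ M - 1 →
          α * w j + Real.cos (2 * Real.pi / 2) * ((b - a) / M) ^ (-(2:ℝ)) *
              ∑ k ∈ Finset.Icc ((j : ℤ) - M) (j : ℤ), fcd 2 k * w ((j : ℤ) - k).toNat = g j) →
        (∀ j : ℕ, 1 ≤ j → j ≤ M - 1 →
          α * w j + 1 * ((b - a) / M) ^ (-(2:ℝ)) *
              ∑ k ∈ Finset.Icc ((j : ℤ) - M) (j : ℤ), gw 2 k * w ((j : ℤ) - k).toNat = g j) := by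
      intro w g hyp j h1 h2
      have heq := hyp j h1 h2
      rw [hcos] at heq
      rw [← heq]
      have : ∑ k ∈ Finset.Icc ((j : ℤ) - M) (j : ℤ), fcd 2 k * w ((j : ℤ) - k).toNat
          = -∑ k ∈ Finset.Icc ((j : ℤ) - M) (j : ℤ), gw 2 k * w ((j : ℤ) - k).toNat := by
        rw [← Finset.sum_neg_distrib]
        apply Finset.sum_congr rfl
        intro k _
        rw [fcd_eq]
        ring
      rw [this]
      ring
    have hup := upper_eq2 a b hab α hα M hM 1 one_pos u f F hF hu0 huM
      (hconv u f hsch) (fun j h1 h2 => le_trans (le_abs_self _) (hfF j h1 h2))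
    have hschneg : ∀ j : ℕ, 1 ≤ j → j ≤ M - 1 →
        α * (-u j) + Real.cos (2 * Real.pi / 2) * ((b - a) / M) ^ (-(2:ℝ)) *
            ∑ k ∈ Finset.Icc ((j : ℤ) - M) (j : ℤ), fcd 2 k * (-u ((j : ℤ) - k).toNat) = -f j := by
      intro j h1 h2
      have heq := hsch j h1 h2
      have hs : ∑ k ∈ Finset.Icc ((j : ℤ) - M) (j : ℤ), fcd 2 k * (-u ((j : ℤ) - k).toNat)
          = -∑ k ∈ Finset.Icc ((j : ℤ) - M) (j : ℤ), fcd 2 k * u ((j : ℤ) - k).toNat := by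
        rw [← Finset.sum_neg_distrib]
        apply Finset.sum_congr rfl
        intro k _
        ring
      rw [hs]
      linarith [heq]
    have hdn := upper_eq2 a b hab α hα M hM 1 one_pos (fun n => -u n) (fun n => -f n) F hF
      (by simp [hu0]) (by simp [huM])
      (hconv (fun n => -u n) (fun n => -f n) hschneg)
      (fun j h1 h2 => le_trans (neg_le_abs _) (hfF j h1 h2))
    intro j hj
    rw [abs_le]
    constructor
    · have := hdn j hj
      rw [div_mul_eq_mul_div, ← sub_nonneg] at this ⊢
      calc (0:ℝ) ≤ (b-a)^(2:ℕ) / (8*1) * F - -u j := by linarith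
        _ = (b-a)^(2:ℕ)/8 * F - -u j := by norm_num
        _ = (b-a)^(2:ℕ)/8 * F + u j := by ring
        _ = _ := by ring
    · have := hup j hj
      calc u j ≤ (b-a)^(2:ℕ)/(8*1) * F := this
        _ = (b-a)^(2:ℕ)/8 * F := by norm_num
  · -- fractional case β < 2
    have hβlt : β < 2 := lt_of_le_of_ne hβ2 hβeq
    set c : ℝ := -Real.cos (β * Real.pi / 2) with hc
    have hcpos : 0 < c := by
      rw [hc]
      have := cos_neg_of β hβ1 hβ2
      linarith
    have hγ := γβ_pos β hβ1 hβlt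
    refine ⟨(b-a)^β / (c * γβ β), by positivity, ?_⟩
    intro α hα M hM f u F hu0 huM hsch hfF
    have hF : 0 ≤ F := le_trans (abs_nonneg _) (hfF 1 le_rfl (by omega))
    have hconv : ∀ (w g : ℕ → ℝ),
        (∀ j : ℕ, 1 ≤ j → j ≤ M - 1 →
          α * w j + Real.cos (β * Real.pi / 2) * ((b - a) / M) ^ (-β) *
              ∑ k ∈ Finset.Icc ((j : ℤ) - M) (j : ℤ), fcd β k * w ((j : ℤ) - k).toNat = g j) →
        (∀ j : ℕ, 1 ≤ j → j ≤ M - 1 →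
          α * w j + c * ((b - a) / M) ^ (-β) *
              ∑ k ∈ Finset.Icc ((j : ℤ) - M) (j : ℤ), gw β k * w ((j : ℤ) - k).toNat = g j) := by
      intro w g hyp j h1 h2
      have heq := hyp j h1 h2
      rw [← heq]
      have : ∑ k ∈ Finset.Icc ((j : ℤ) - M) (j : ℤ), fcd β k * w ((j : ℤ) - k).toNat
          = -∑ k ∈ Finset.Icc ((j : ℤ) - M) (j : ℤ), gw β k * w ((j : ℤ) - k).toNat := by
        rw [← Finset.sum_neg_distrib]
        apply Finset.sum_congr rfl
        intro k _
        rw [fcd_eq]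
        ring
      rw [this, hc]
      ring
    have hup := upper_lt2 β a b hβ1 hβlt hab α hα M hM c hcpos u f F hF hu0 huM
      (hconv u f hsch) (fun j h1 h2 => le_trans (le_abs_self _) (hfF j h1 h2))
    have hschneg : ∀ j : ℕ, 1 ≤ j → j ≤ M - 1 →
        α * (-u j) + Real.cos (β * Real.pi / 2) * ((b - a) / M) ^ (-β) *
            ∑ k ∈ Finset.Icc ((j : ℤ) - M) (j : ℤ), fcd β k * (-u ((j : ℤ) - k).toNat) = -f j := by
      intro j h1 h2
      have heq := hsch j h1 h2
      have hs : ∑ k ∈ Finset.Icc ((j : ℤ) - M) (j : ℤ), fcd β k * (-u ((j : ℤ) - k).toNat)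
          = -∑ k ∈ Finset.Icc ((j : ℤ) - M) (j : ℤ), fcd β k * u ((j : ℤ) - k).toNat := by
        rw [← Finset.sum_neg_distrib]
        apply Finset.sum_congr rfl
        intro k _
        ring
      rw [hs]
      linarith [heq]
    have hdn := upper_lt2 β a b hβ1 hβlt hab α hα M hM c hcpos (fun n => -u n) (fun n => -f n) F hF
      (by simp [hu0]) (by simp [huM])
      (hconv (fun n => -u n) (fun n => -f n) hschneg)
      (fun j h1 h2 => le_trans (neg_le_abs _) (hfF j h1 h2))
    intro j hj
    rw [abs_le]
    constructor
    · have := hdn j hj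
      linarith
    · exact hup j hj
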